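/- For n ≥ 2, R_n(x) = 2^{-(n-1)} · Σ_{k=0}^{⌊(n+1)/2⌋} p(n, n-2k+1) · (x+1)^{n-k-1} · (x-1)^k, where p(n,j) are the coefficients of the derivative polynomial P_n. -/

import Mathlib

open Polynomial Finset

/-- Derivative polynomials for tangent: `P 0 = X`, `P (n+1) = (1+X^2) * (P n)'`. -/
noncomputable def P : ℕ → Polynomial ℝ
  | 0 => Polynomial.X
  | n + 1 => (1 + Polynomial.X ^ 2) * (P n).derivative

/-- The values of a permutation of `Fin n`, as a function `ℕ → ℕ` (junk value `0` off-range). -/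
def permVal {n : ℕ} (π : Equiv.Perm (Fin n)) : ℕ → ℕ :=
  fun j => if h : j < n then (π ⟨j, h⟩ : ℕ) else 0

/-- The number of alternating runs of a permutation of `{1,…,n}` (0-indexed positions):
one more than the number of interior positions where the permutation changes direction.
By convention this is `0` when `n ≤ 1`. -/
def runs (n : ℕ) (π : Equiv.Perm (Fin n)) : ℕ :=
  if n ≤ 1 then 0 else
    1 + ((Finset.Ico 1 (n - 1)).filter (fun i =>
      (permVal π (i - 1) < permVal π i ∧ permVal π (i + 1) < permVal π i) ∨
      (permVal π i < permVal π (i - 1) ∧ permVal π i < permVal π (i + 1)))).card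

/-- `R n k`: the number of permutations of `{1,…,n}` with exactly `k` alternating runs. -/
def R (n k : ℕ) : ℕ :=
  (Finset.univ.filter (fun π : Equiv.Perm (Fin n) => runs n π = k)).card

/-- The generating polynomial `R_n(x) = ∑_k R(n,k) x^k`. -/
noncomputable def Rpoly (n : ℕ) : Polynomial ℝ :=
  ∑ k ∈ Finset.range n, Polynomial.C ((R n k : ℝ)) * Polynomial.X ^ k

/-- Stirling numbers of the second kind. -/
def stirling2 : ℕ → ℕ → ℕ
  | 0, 0 => 1
  | 0, _ + 1 => 0
  | _ + 1, 0 => 0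
  | n + 1, k + 1 => (k + 1) * stirling2 n (k + 1) + stirling2 n k

/-- The number of descents of a permutation of `Fin n`. -/
def des (n : ℕ) (π : Equiv.Perm (Fin n)) : ℕ :=
  ((Finset.range (n - 1)).filter (fun i => permVal π (i + 1) < permVal π i)).card

/-!
Inserting the maximum into each of the `n + 1` slots of a permutation of `{1,…,n}` with `r`
alternating runs produces `r` permutations with `r` runs, two with `r + 1` runs and `n - 1 - r`
with `r + 2` runs. Summing over all permutations gives, for `n ≥ 2`,
`R_{n+1} = L_n R_n` with `L_n f = (2x + (n-1)x²) f + x(1-x²) f'` (`runsOperator n`).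

The right-hand side satisfies the same recurrence. For `a + k = n - 1`,
`4 L_n ((x+1)^a (x-1)^k) = (a - k + 2) ((x+1)^(a+2) (x-1)^k - (x+1)^a (x-1)^(k+2))`,
while `2 = (x+1) - (x-1)`; with the recurrence `p(n+1,j) = (j+1) p(n,j+1) + (j-1) p(n,j-1)` the
two resulting sums agree after a telescoping rearrangement. Both sides equal `2x` at `n = 2`.
-/

/-! Words of descents -/

def turns (m : ℕ) (d : ℕ → Bool) : ℕ :=
  ∑ j ∈ range (m - 1), if d j ≠ d (j + 1) then 1 else 0

/-- If `d j` records whether position `j` of a permutation is a descent, `splice i d` does the same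
after the maximum is inserted at slot `i`: position `i - 1` becomes an ascent, position `i` a
descent, and the old `d (i - 1)` is overwritten. -/
def splice (i : ℕ) (d : ℕ → Bool) (j : ℕ) : Bool :=
  if j + 1 < i then d j else if j + 1 = i then false else if j = i then true else d (j - 1)

section Splice

variable {i j : ℕ} (d : ℕ → Bool)

lemma splice_of_succ_lt (h : j + 1 < i) : splice i d j = d j := by
  simp [splice, h]

lemma splice_of_succ_eq (h : j + 1 = i) : splice i d j = false := by
  simp [splice, h]

lemma splice_self : splice i d i = true := by
  simp [splice]

lemma splice_of_lt (h : i < j) : splice i d j = d (j - 1) := by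
  simp [splice, show ¬ j + 1 < i by omega, show j + 1 ≠ i by omega, h.ne']

end Splice

lemma turns_succ {m : ℕ} (hm : 1 ≤ m) (d : ℕ → Bool) :
    turns (m + 1) d = turns m d + if d (m - 1) ≠ d m then 1 else 0 := by
  obtain ⟨m, rfl⟩ : ∃ k, m = k + 1 := ⟨m - 1, by omega⟩
  simp [turns, sum_range_succ]

lemma turns_congr {m : ℕ} {d d' : ℕ → Bool} (h : ∀ j < m, d j = d' j) :
    turns m d = turns m d' :=
  sum_congr rfl fun j hj => by
    rw [mem_range] at hj
    rw [h j (by omega), h (j + 1) (by omega)]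

lemma turns_splice_append (s : ℕ) (d : ℕ → Bool) :
    turns (s + 2) (splice (s + 2) d) = turns (s + 1) d + if d s then 1 else 0 := by
  rw [turns_succ (by omega), turns_congr fun j hj => splice_of_succ_lt d (by omega : j + 1 < s + 2),
    Nat.add_sub_cancel, splice_of_succ_lt d (by omega), splice_of_succ_eq d rfl]
  cases d s <;> simp

lemma turns_splice_peak (s : ℕ) (d : ℕ → Bool) :
    turns (s + 3) (splice (s + 2) d) = turns (s + 1) d + (if d s then 1 else 0) + 1 := by
  rw [turns_succ (by omega), turns_splice_append, show s + 2 - 1 = s + 1 from rfl,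
    splice_of_succ_eq d rfl, splice_self]
  simp

noncomputable def spliceSum (m : ℕ) (d : ℕ → Bool) : ℝ[X] :=
  ∑ i ∈ range (m + 2), X ^ turns (m + 1) (splice i d)

lemma spliceSum_succ (m : ℕ) (d : ℕ → Bool) :
    spliceSum (m + 2) d =
      X ^ (if d m ≠ d (m + 1) then 1 else 0) *
          (spliceSum (m + 1) d - X ^ turns (m + 2) (splice (m + 1) d) -
            X ^ turns (m + 2) (splice (m + 2) d)) +
        X ^ turns (m + 3) (splice (m + 1) d) + X ^ turns (m + 3) (splice (m + 2) d) +
        X ^ turns (m + 3) (splice (m + 3) d) := by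
  have hfar : ∀ i ∈ range (m + 1), X ^ turns (m + 3) (splice i d) =
      X ^ (if d m ≠ d (m + 1) then 1 else 0) * (X ^ turns (m + 2) (splice i d) : ℝ[X]) := by
    intro i hi
    rw [mem_range] at hi
    rw [turns_succ (by omega), show m + 2 - 1 = m + 1 from rfl, splice_of_lt d (by omega),
      splice_of_lt d (by omega), pow_add, mul_comm]
    rfl
  simp only [spliceSum, sum_range_succ, sum_congr rfl hfar, ← mul_sum]
  ring

lemma spliceSum_eq {m : ℕ} (hm : 1 ≤ m) (d : ℕ → Bool) :
    spliceSum m d = X ^ turns m d *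
      (C ((turns m d : ℝ) + 1) + 2 * X + C ((m : ℝ) - 1 - turns m d) * X ^ 2) := by
  induction m, hm using Nat.le_induction with
  | base => cases h0 : d 0 <;> simp [spliceSum, turns, splice, sum_range_succ, h0] <;> ring
  | succ m hm ih =>
    obtain rfl | ⟨s, rfl⟩ : m = 1 ∨ ∃ s, m = s + 2 := by
      rcases m with _ | _ | s
      exacts [absurd hm (by omega), .inl rfl, .inr ⟨s, rfl⟩]
    · cases h0 : d 0 <;> cases h1 : d 1 <;>
        simp [spliceSum, turns, splice, sum_range_succ, h0, h1, map_ofNat] <;> ring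
    have hpeak : turns (s + 4) (splice (s + 2) d) =
        turns (s + 1) d + (if d s then 1 else 0) + 1 + if d (s + 2) then 0 else 1 := by
      rw [turns_succ (by omega), turns_splice_peak, show s + 3 - 1 = s + 2 from rfl, splice_self,
        splice_of_lt d (by omega), show s + 3 - 1 = s + 2 from rfl]
      cases d (s + 2) <;> simp
    rw [spliceSum_succ, ih, turns_splice_peak, turns_splice_append, hpeak, turns_splice_peak,
      turns_splice_append, turns_succ (m := s + 2) (by omega), turns_succ (m := s + 1) (by omega)]
    simp only [show s + 2 - 1 = s + 1 from rfl, show s + 1 - 1 = s from rfl]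
    cases d s <;> cases d (s + 1) <;> cases d (s + 2) <;>
      · simp only [ne_eq, Bool.false_eq_true, Bool.true_eq_false, not_true_eq_false,
          not_false_eq_true, if_true, if_false, map_add, map_sub, map_natCast, map_one]
        push_cast
        ring

/-! Inserting the maximum into a permutation -/

section Insertion

variable {n : ℕ}

lemma permVal_of_lt (π : Equiv.Perm (Fin n)) {j : ℕ} (hj : j < n) :
    permVal π j = π ⟨j, hj⟩ :=
  dif_pos hj

lemma permVal_lt (π : Equiv.Perm (Fin n)) {j : ℕ} (hj : j < n) : permVal π j < n := by
  rw [permVal_of_lt π hj]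
  exact Fin.is_lt _

lemma permVal_injOn (π : Equiv.Perm (Fin n)) {j k : ℕ} (hj : j < n) (hk : k < n)
    (h : permVal π j = permVal π k) : j = k := by
  rw [permVal_of_lt π hj, permVal_of_lt π hk] at h
  simpa using π.injective (Fin.ext h)

def insertMax (π : Equiv.Perm (Fin n)) (i : Fin (n + 1)) : Equiv.Perm (Fin (n + 1)) :=
  (finSuccEquiv' i).trans ((Equiv.optionCongr π).trans (finSuccEquiv' (Fin.last n)).symm)

lemma insertMax_apply_self (π : Equiv.Perm (Fin n)) (i : Fin (n + 1)) :
    insertMax π i i = Fin.last n := by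
  simp [insertMax, finSuccEquiv'_at, finSuccEquiv'_symm_none]

lemma insertMax_apply_succAbove (π : Equiv.Perm (Fin n)) (i : Fin (n + 1)) (j : Fin n) :
    insertMax π i (i.succAbove j) = (π j).castSucc := by
  simp [insertMax, finSuccEquiv'_succAbove, finSuccEquiv'_symm_some, Fin.succAbove_last]

lemma insertMax_injective :
    Function.Injective fun p : Equiv.Perm (Fin n) × Fin (n + 1) => insertMax p.1 p.2 := by
  rintro ⟨π, i⟩ ⟨π', i'⟩ h
  simp only at h
  obtain rfl : i = i' := (insertMax π' i').injective <| by
    rw [insertMax_apply_self, ← h, insertMax_apply_self]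
  refine Prod.ext (Equiv.ext fun j => Fin.castSucc_injective n ?_) rfl
  rw [← insertMax_apply_succAbove, ← insertMax_apply_succAbove, h]

lemma insertMax_bijective :
    Function.Bijective fun p : Equiv.Perm (Fin n) × Fin (n + 1) => insertMax p.1 p.2 := by
  rw [Fintype.bijective_iff_injective_and_card]
  refine ⟨insertMax_injective, ?_⟩
  simp [Fintype.card_perm, Nat.factorial_succ, Nat.mul_comm]

lemma permVal_insertMax (π : Equiv.Perm (Fin n)) (i : Fin (n + 1)) {j : ℕ} (hj : j ≤ n) :
    permVal (insertMax π i) j =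
      if j < i then permVal π j else if j = i then n else permVal π (j - 1) := by
  rw [permVal_of_lt _ (by omega)]
  rcases lt_trichotomy j i with h | h | h
  · have hjn : j < n := by omega
    have hj : (⟨j, by omega⟩ : Fin (n + 1)) = i.succAbove ⟨j, hjn⟩ :=
      (Fin.succAbove_of_castSucc_lt i ⟨j, hjn⟩ (by rw [Fin.lt_def]; exact h)).symm
    rw [hj, insertMax_apply_succAbove, if_pos h, permVal_of_lt π hjn, Fin.val_castSucc]
  · rw [show (⟨j, _⟩ : Fin (n + 1)) = i from Fin.ext h, insertMax_apply_self, if_neg h.not_lt,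
      if_pos h, Fin.val_last]
  · have hjn : j - 1 < n := by omega
    have hj : (⟨j, by omega⟩ : Fin (n + 1)) = i.succAbove ⟨j - 1, hjn⟩ := Fin.ext <| by
      rw [Fin.succAbove_of_le_castSucc _ _ (by simp only [Fin.le_def, Fin.val_castSucc]; omega)]
      simp only [Fin.val_succ]
      omega
    rw [hj, insertMax_apply_succAbove, if_neg (by omega), if_neg (by omega), permVal_of_lt π hjn,
      Fin.val_castSucc]

def descentAt (π : Equiv.Perm (Fin n)) (j : ℕ) : Bool :=
  decide (permVal π (j + 1) < permVal π j)

lemma descentAt_insertMax (π : Equiv.Perm (Fin n)) (i : Fin (n + 1)) {j : ℕ} (hj : j < n) :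
    descentAt (insertMax π i) j = splice i (descentAt π) j := by
  unfold descentAt
  rw [permVal_insertMax π i (by omega : j + 1 ≤ n), permVal_insertMax π i hj.le]
  rcases lt_trichotomy (j + 1) i with h | h | h
  · rw [splice_of_succ_lt _ h, if_pos h, if_pos (by omega)]
  · rw [splice_of_succ_eq _ h, if_neg (by omega), if_pos h, if_pos (by omega)]
    simpa using (permVal_lt π hj).le
  · obtain h' | h' : j = i ∨ (i : ℕ) < j := by omega
    · rw [h', splice_self, ← h', if_neg (by omega), if_neg (by omega), if_neg (by omega),
        if_pos rfl, Nat.add_sub_cancel]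
      simpa using permVal_lt π hj
    · rw [splice_of_lt _ h', if_neg (by omega), if_neg (by omega), if_neg (by omega),
        if_neg (by omega), Nat.add_sub_cancel, Nat.sub_add_cancel (by omega)]

lemma runs_eq_one_add_turns (hn : 2 ≤ n) (π : Equiv.Perm (Fin n)) :
    runs n π = 1 + turns (n - 1) (descentAt π) := by
  rw [runs, if_neg (by omega), card_filter, turns, sum_Ico_eq_sum_range]
  congr 1
  refine sum_congr (by congr 1) fun j hj => ?_
  rw [mem_range] at hj
  rw [show 1 + j - 1 = j by omega, show 1 + j = j + 1 by omega]
  have hne₁ : permVal π j ≠ permVal π (j + 1) := fun h =>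
    absurd (permVal_injOn π (by omega) (by omega) h) (by omega)
  have hne₂ : permVal π (j + 1) ≠ permVal π (j + 1 + 1) := fun h =>
    absurd (permVal_injOn π (by omega) (by omega) h) (by omega)
  unfold descentAt
  by_cases h₁ : permVal π (j + 1) < permVal π j <;>
    by_cases h₂ : permVal π (j + 1 + 1) < permVal π (j + 1) <;> simp [h₁, h₂] <;> omega

lemma runs_lt (hn : 1 ≤ n) (π : Equiv.Perm (Fin n)) : runs n π < n := by
  unfold runs
  split_ifs with h
  · omega
  · have := card_filter_le (Ico 1 (n - 1)) fun i =>
      (permVal π (i - 1) < permVal π i ∧ permVal π (i + 1) < permVal π i) ∨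
        (permVal π i < permVal π (i - 1) ∧ permVal π i < permVal π (i + 1))
    simp only [Nat.card_Ico] at this
    omega

end Insertion

/-! The recurrence for `R_n` -/

noncomputable def runsOperator (n : ℕ) : ℝ[X] →ₗ[ℝ] ℝ[X] :=
  LinearMap.mulLeft ℝ (2 * X + C ((n : ℝ) - 1) * X ^ 2) +
    LinearMap.mulLeft ℝ (X * (1 - X ^ 2)) ∘ₗ derivative

lemma runsOperator_apply (n : ℕ) (f : ℝ[X]) :
    runsOperator n f = (2 * X + C ((n : ℝ) - 1) * X ^ 2) * f + X * (1 - X ^ 2) * derivative f :=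
  rfl

lemma runsOperator_C_mul (n : ℕ) (c : ℝ) (f : ℝ[X]) :
    runsOperator n (C c * f) = C c * runsOperator n f := by
  rw [← smul_eq_C_mul, map_smul, smul_eq_C_mul]

lemma Rpoly_eq_sum {n : ℕ} (hn : 1 ≤ n) :
    Rpoly n = ∑ π : Equiv.Perm (Fin n), X ^ runs n π := by
  rw [Rpoly, ← sum_fiberwise_of_maps_to fun π _ => mem_range.2 (runs_lt hn π)]
  refine sum_congr rfl fun k _ => ?_
  rw [R, sum_congr rfl fun π hπ => by rw [(mem_filter.1 hπ).2], sum_const, nsmul_eq_mul,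
    C_eq_natCast]

lemma sum_X_pow_runs_insertMax {n : ℕ} (hn : 2 ≤ n) (π : Equiv.Perm (Fin n)) :
    ∑ i : Fin (n + 1), X ^ runs (n + 1) (insertMax π i) = runsOperator n (X ^ runs n π) := by
  have hruns (i : Fin (n + 1)) :
      runs (n + 1) (insertMax π i) = 1 + turns n (splice i (descentAt π)) := by
    rw [runs_eq_one_add_turns (by omega), Nat.add_sub_cancel,
      turns_congr fun j hj => descentAt_insertMax π i hj]
  obtain ⟨m, rfl⟩ : ∃ m, n = m + 1 := ⟨n - 1, by omega⟩
  calc ∑ i : Fin (m + 2), X ^ runs (m + 2) (insertMax π i)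
      = X * spliceSum m (descentAt π) := by
        simp only [hruns, pow_add, pow_one, ← mul_sum, spliceSum]
        rw [Fin.sum_univ_eq_sum_range fun i => X ^ turns (m + 1) (splice i (descentAt π))]
    _ = runsOperator (m + 1) (X ^ runs (m + 1) π) := by
        rw [spliceSum_eq (by omega), runs_eq_one_add_turns hn, runsOperator_apply,
          derivative_X_pow, Nat.add_sub_cancel, Nat.add_sub_cancel_left]
        simp only [map_add, map_sub, map_natCast, map_one]
        push_cast
        ring

lemma Rpoly_succ {n : ℕ} (hn : 2 ≤ n) : Rpoly (n + 1) = runsOperator n (Rpoly n) := by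
  rw [Rpoly_eq_sum (by omega), Rpoly_eq_sum (by omega), map_sum,
    ← Fintype.sum_bijective _ insertMax_bijective (fun p => X ^ runs (n + 1) (insertMax p.1 p.2))
      _ fun _ => rfl, Fintype.sum_prod_type]
  exact sum_congr rfl fun π _ => sum_X_pow_runs_insertMax hn π

lemma Rpoly_two : Rpoly 2 = 2 * X := by
  have h0 : R 2 0 = 0 := by decide
  have h1 : R 2 1 = 2 := by decide
  simp [Rpoly, sum_range_succ, h0, h1]

/-! Coefficients of the derivative polynomials -/

/-- Extending the coefficients by zero to negative indices lets the recurrence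
`coeffInt_P_succ` hold without boundary cases. -/
def coeffInt {R : Type*} [Semiring R] (p : R[X]) (j : ℤ) : R :=
  if j < 0 then 0 else p.coeff j.toNat

section CoeffInt

variable {R : Type*} [Semiring R] (p : R[X])

@[simp]
lemma coeffInt_natCast (k : ℕ) : coeffInt p k = p.coeff k := by
  simp [coeffInt]

lemma coeffInt_of_neg {j : ℤ} (hj : j < 0) : coeffInt p j = 0 :=
  if_pos hj

lemma coeffInt_of_natDegree_lt {j : ℤ} (hj : (p.natDegree : ℤ) < j) : coeffInt p j = 0 := by
  lift j to ℕ using by omega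
  simpa using coeff_eq_zero_of_natDegree_lt (by exact_mod_cast hj)

end CoeffInt

lemma coeffInt_one_add_X_sq_mul_derivative {R : Type*} [CommRing R] (f : R[X]) (j : ℤ) :
    coeffInt ((1 + X ^ 2) * derivative f) j =
      (j + 1) * coeffInt f (j + 1) + (j - 1) * coeffInt f (j - 1) := by
  have hcoeff (k : ℕ) : ((1 + X ^ 2) * derivative f).coeff k =
      f.coeff (k + 1) * (k + 1) + if 2 ≤ k then f.coeff (k - 1) * (k - 1 : ℕ) else 0 := by
    rw [add_mul, one_mul, coeff_add, coeff_X_pow_mul', coeff_derivative]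
    split_ifs
    · rw [coeff_derivative, show k - 2 + 1 = k - 1 by omega]
      push_cast [Nat.cast_sub (by omega : 2 ≤ k), Nat.cast_sub (by omega : 1 ≤ k)]
      ring
    · rfl
  obtain ⟨k, rfl | rfl⟩ := Int.eq_nat_or_neg j
  · rcases k with _ | _ | k
    · simp [coeffInt, hcoeff]
    · simp [coeffInt, hcoeff, mul_comm]
    · rw [show ((k + 2 : ℕ) : ℤ) + 1 = (k + 3 : ℕ) by push_cast; ring,
        show ((k + 2 : ℕ) : ℤ) - 1 = (k + 1 : ℕ) by push_cast; ring]
      simp only [coeffInt_natCast, hcoeff, if_pos (show 2 ≤ k + 2 by omega)]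
      push_cast
      ring
  · rcases k with _ | _ | k
    · simp [coeffInt, hcoeff]
    · simp [coeffInt]
    · rw [coeffInt_of_neg _ (by omega), coeffInt_of_neg _ (by omega),
        coeffInt_of_neg _ (by omega)]
      simp

lemma P_succ (n : ℕ) : P (n + 1) = (1 + X ^ 2) * derivative (P n) := rfl

lemma natDegree_P_le (n : ℕ) : (P n).natDegree ≤ n + 1 := by
  induction n with
  | zero => exact natDegree_X_le
  | succ n ih =>
    rw [P_succ]
    refine natDegree_mul_le.trans ?_
    have h1 : (1 + X ^ 2 : ℝ[X]).natDegree ≤ 2 := by compute_degree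
    have h2 := natDegree_derivative_le (P n)
    omega

lemma coeffInt_P_succ (n : ℕ) (j : ℤ) :
    coeffInt (P (n + 1)) j =
      (j + 1) * coeffInt (P n) (j + 1) + (j - 1) * coeffInt (P n) (j - 1) :=
  coeffInt_one_add_X_sq_mul_derivative (P n) j

/-! The expansion satisfies the same recurrence -/

noncomputable def runsExpansion (n : ℕ) : ℝ[X] :=
  ∑ k ∈ range ((n + 1) / 2 + 1),
    C ((P n).coeff (n + 1 - 2 * k)) * (X + 1) ^ (n - k - 1) * (X - 1) ^ k

lemma runsExpansion_eq_sum_range (n N : ℕ) (hN : (n + 1) / 2 + 1 ≤ N) :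
    runsExpansion n = ∑ k ∈ range N,
      C (coeffInt (P n) (n + 1 - 2 * k)) * (X + 1) ^ (n - k - 1) * (X - 1) ^ k := by
  rw [eventually_constant_sum _ hN, runsExpansion]
  · refine sum_congr rfl fun k hk => ?_
    rw [mem_range] at hk
    rw [show (n : ℤ) + 1 - 2 * k = (n + 1 - 2 * k : ℕ) by omega, coeffInt_natCast]
  · intro k hk
    rw [coeffInt_of_neg _ (by omega), map_zero, zero_mul, zero_mul]

lemma four_mul_runsOperator_pow_mul_pow (a k : ℕ) :
    4 * runsOperator (a + k + 1) ((X + 1) ^ a * (X - 1) ^ k) =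
      C ((a : ℝ) - k + 2) *
        ((X + 1) ^ (a + 2) * (X - 1) ^ k - (X + 1) ^ a * (X - 1) ^ (k + 2)) := by
  simp only [runsOperator_apply, derivative_mul, derivative_pow, derivative_add,
    derivative_sub, derivative_X, derivative_one, add_zero, sub_zero, mul_one]
  rcases a with _ | a <;> rcases k with _ | k <;>
    · simp only [map_sub, map_add, map_natCast, map_ofNat, map_one, Nat.add_sub_cancel]
      push_cast
      ring

lemma four_mul_runsOperator_runsExpansion {n : ℕ} (hn : 2 ≤ n) :
    4 * runsOperator n (runsExpansion n) =
      ∑ k ∈ range ((n + 1) / 2 + 1),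
        C (((n : ℝ) + 1 - 2 * k) * coeffInt (P n) (n + 1 - 2 * k)) *
          ((X + 1) ^ (n + 1 - k) * (X - 1) ^ k -
            (X + 1) ^ (n + 1 - (k + 2)) * (X - 1) ^ (k + 2)) := by
  rw [runsExpansion_eq_sum_range n _ le_rfl, map_sum, mul_sum]
  refine sum_congr rfl fun k hk => ?_
  rw [mem_range] at hk
  obtain ⟨a, ha⟩ : ∃ a, n = a + k + 1 := ⟨n - k - 1, by omega⟩
  have hbasis := four_mul_runsOperator_pow_mul_pow a k
  rw [← ha] at hbasis
  rw [mul_assoc, runsOperator_C_mul, mul_left_comm, show n - k - 1 = a by omega, hbasis,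
    show n + 1 - k = a + 2 by omega, show n + 1 - (k + 2) = a by omega, map_mul,
    show (a : ℝ) - k + 2 = n + 1 - 2 * k by rw [ha]; push_cast; ring]
  ring

lemma two_mul_runsExpansion_succ_eq_sum {n : ℕ} (hn : 2 ≤ n) :
    2 * runsExpansion (n + 1) =
      ∑ m ∈ range ((n + 1) / 2 + 2),
        C (coeffInt (P (n + 1)) (n + 2 - 2 * m)) *
          ((X + 1) ^ (n + 1 - m) * (X - 1) ^ m -
            (X + 1) ^ (n + 1 - (m + 1)) * (X - 1) ^ (m + 1)) := by
  rw [runsExpansion_eq_sum_range (n + 1) ((n + 1) / 2 + 2) (by omega), mul_sum]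
  refine sum_congr rfl fun m hm => ?_
  rw [mem_range] at hm
  obtain ⟨a, ha⟩ : ∃ a, n = m + a := ⟨n - m, by omega⟩
  rw [show n + 1 - m - 1 = a by omega, show n + 1 - m = a + 1 by omega,
    show n + 1 - (m + 1) = a by omega,
    show ((n + 1 : ℕ) : ℤ) + 1 - 2 * m = n + 2 - 2 * m by push_cast; ring]
  ring

lemma sum_range_mul_sub_succ_eq {R : Type*} [CommRing R] (α β E : ℕ → R) (h0 : α 0 = β 0)
    (hsucc : ∀ m, α (m + 1) = β m + β (m + 1)) (N : ℕ) :
    ∑ m ∈ range (N + 1), α m * (E m - E (m + 1)) =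
      ∑ m ∈ range N, β m * (E m - E (m + 2)) + β N * (E N - E (N + 1)) := by
  induction N with
  | zero => simp [h0]
  | succ N ih =>
    rw [sum_range_succ, ih, sum_range_succ, hsucc]
    ring

lemma two_mul_runsExpansion_succ {n : ℕ} (hn : 2 ≤ n) :
    2 * runsExpansion (n + 1) = 4 * runsOperator n (runsExpansion n) := by
  set K := (n + 1) / 2
  let α : ℕ → ℝ[X] := fun m => C (coeffInt (P (n + 1)) (n + 2 - 2 * m))
  let β : ℕ → ℝ[X] := fun m => C (((n : ℝ) + 1 - 2 * m) * coeffInt (P n) (n + 1 - 2 * m))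
  have hα0 : α 0 = β 0 := by
    have hdeg : ((P n).natDegree : ℤ) < n + 2 - 2 * (0 : ℕ) + 1 := by
      have := natDegree_P_le n
      omega
    simp only [α, β, coeffInt_P_succ, coeffInt_of_natDegree_lt (P n) hdeg]
    rw [show (n : ℤ) + 2 - 2 * (0 : ℕ) - 1 = n + 1 - 2 * (0 : ℕ) by push_cast; ring]
    push_cast
    ring_nf
  have hαsucc (m : ℕ) : α (m + 1) = β m + β (m + 1) := by
    simp only [α, β, coeffInt_P_succ, ← map_add]
    rw [show (n : ℤ) + 2 - 2 * (m + 1 : ℕ) + 1 = n + 1 - 2 * m by push_cast; ring,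
      show (n : ℤ) + 2 - 2 * (m + 1 : ℕ) - 1 = n + 1 - 2 * (m + 1 : ℕ) by push_cast; ring]
    push_cast
    ring_nf
  have hβ : β (K + 1) = 0 := by
    simp only [β, coeffInt_of_neg _ (show (n : ℤ) + 1 - 2 * (K + 1 : ℕ) < 0 by omega),
      mul_zero, map_zero]
  rw [two_mul_runsExpansion_succ_eq_sum hn, four_mul_runsOperator_runsExpansion hn,
    sum_range_mul_sub_succ_eq α β (fun m => (X + 1) ^ (n + 1 - m) * (X - 1) ^ m) hα0 hαsucc,
    hβ, zero_mul, add_zero]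

lemma runsOperator_C_mul_runsExpansion {n : ℕ} (hn : 2 ≤ n) :
    runsOperator n (C ((2 ^ (n - 1))⁻¹) * runsExpansion n) =
      C ((2 ^ n)⁻¹) * runsExpansion (n + 1) := by
  obtain ⟨m, rfl⟩ : ∃ m, n = m + 1 := ⟨n - 1, by omega⟩
  have h := two_mul_runsExpansion_succ hn
  rw [← map_ofNat C 2, ← map_ofNat C 4] at h
  rw [runsOperator_C_mul, Nat.add_sub_cancel]
  calc C ((2 ^ m)⁻¹) * runsOperator (m + 1) (runsExpansion (m + 1))
      = C ((2 ^ (m + 1))⁻¹ / 2) * (C 4 * runsOperator (m + 1) (runsExpansion (m + 1))) := by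
        rw [← mul_assoc, ← map_mul, pow_succ]
        congr 2
        field_simp
        norm_num
    _ = C ((2 ^ (m + 1))⁻¹) * runsExpansion (m + 1 + 1) := by
        rw [← h, ← mul_assoc, ← map_mul]
        norm_num

lemma runsExpansion_two : runsExpansion 2 = 4 * X := by
  have hP : P 2 = 2 * X + 2 * X ^ 3 := by
    simp [P]
    ring
  simp [runsExpansion, sum_range_succ, hP, coeff_X, coeff_X_pow, map_ofNat]
  ring

/-- `R_n(x) = 2^{-(n-1)} ∑_{k=0}^{⌊(n+1)/2⌋} p(n, n-2k+1) (x+1)^{n-k-1} (x-1)^k`. -/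
theorem Rpoly_expansion (n : ℕ) (hn : 2 ≤ n) :
    Rpoly n =
      Polynomial.C (((2 : ℝ) ^ (n - 1))⁻¹) *
        ∑ k ∈ Finset.range ((n + 1) / 2 + 1),
          Polynomial.C ((P n).coeff (n + 1 - 2 * k)) *
            (Polynomial.X + 1) ^ (n - k - 1) * (Polynomial.X - 1) ^ k := by
  change Rpoly n = C ((2 ^ (n - 1))⁻¹) * runsExpansion n
  induction n, hn using Nat.le_induction with
  | base =>
    rw [Rpoly_two, runsExpansion_two, ← mul_assoc, ← map_ofNat C 4, ← map_mul,
      ← map_ofNat C 2]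
    norm_num
  | succ n hn ih =>
    rw [Rpoly_succ hn, ih, runsOperator_C_mul_runsExpansion hn, Nat.add_sub_cancel]
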